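/- Let Y = {v_A : A is a 4-element subset of {1,…,9} with {1,2} ⊆ A}, where v_A ∈ H_8 is the point whose i-th coordinate equals 2/3 for i ∈ A and −1/3 for i ∉ A. Then X = R_8 ∪ Y is a maximal 2-distance set in H_8 with exactly 30 points, whose two distances are √2 and 2: every pair of distinct points of X is at distance √2 or 2, both distances occur, and for every z ∈ H_8 with z ∉ X the set X ∪ {z} is not a 2-distance set. -/

import Mathlib

noncomputable section

open scoped BigOperators Classical

/-- The set of Euclidean distances between distinct points of `X`. -/
def distSet {m : ℕ} (X : Set (EuclideanSpace ℝ (Fin m))) : Set ℝ :=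
  {r | ∃ x ∈ X, ∃ y ∈ X, x ≠ y ∧ dist x y = r}

/-- `X` is a 2-distance set: exactly two distances occur between distinct points. -/
def IsTwoDistSet {m : ℕ} (X : Set (EuclideanSpace ℝ (Fin m))) : Prop :=
  (distSet X).ncard = 2

/-- The affine hyperplane `H_d = {x ∈ ℝ^{d+1} : ∑ x_i = 1}`. -/
def Hplane (d : ℕ) : Set (EuclideanSpace ℝ (Fin (d+1))) :=
  {x | ∑ i, x i = 1}

/-- The regular simplex `R_d`: the standard basis vectors of `ℝ^{d+1}`. -/
def simplex (d : ℕ) : Set (EuclideanSpace ℝ (Fin (d+1))) :=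
  Set.range (fun i => EuclideanSpace.single i (1:ℝ))

/-- The constant `c = (1 - (d+1-k)β)/(d+1)`. -/
def cval (d k : ℕ) (β : ℝ) : ℝ := (1 - ((d:ℝ) + 1 - (k:ℝ)) * β) / ((d:ℝ) + 1)

/-- The set `T_d(k,β)` of points of `H_d` all of whose coordinates lie in `{c, c+β}`,
with exactly `k` coordinates equal to `c`. -/
def Tset (d k : ℕ) (β : ℝ) : Set (EuclideanSpace ℝ (Fin (d+1))) :=
  {x | x ∈ Hplane d ∧ (∀ i, x i = cval d k β ∨ x i = cval d k β + β) ∧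
    {i | x i = cval d k β}.ncard = k}

/-- The point of `H_8` attached to a 4-subset `A` of `{1,…,9}`:
`2/3` on `A`, `-1/3` elsewhere. -/
def vFour (A : Finset (Fin (8+1))) : EuclideanSpace ℝ (Fin (8+1)) :=
  WithLp.toLp 2 (fun i => if i ∈ A then (2/3 : ℝ) else -1/3)

/-!
The points `e_j` and `v_A` both have just two coordinate values, differing by `1`. For two such
points `b𝟙 + 𝟙_s` and `c𝟙 + 𝟙_t` the squared distance is an affine function of `|s|`, `|t|` and
`|s ∩ t|`, so every distance within `X` is read off an intersection size.

For maximality, let `z ∈ H_8` be at distance `√2` or `2` from every point of `X`. Since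
`‖z - e_j‖² = ‖z‖² - 2 z_j + 1`, the coordinates of `z` take two values differing by `1`, so
`z = β𝟙 + 𝟙_B`; the hyperplane equation and the value of `‖z‖²` then leave only `|B| = 4` (so
`z = v_B`) or `|B| = 7`. If `|B| = 7`, the `v_A` with `A ⊇ Bᶜ` is at squared distance `6`. If
`|B| = 4` and `B` misses `0` or `1`, some `v_A` meets `B` in at most one point and is at squared
distance at least `6`. Hence `z = v_B` with `B ∈ Y`.
-/

namespace TwoDistance

lemma mem_sqrt_two_two_iff {d : ℝ} (hd : 0 ≤ d) :
    d ∈ ({√2, 2} : Set ℝ) ↔ d ^ 2 = 2 ∨ d ^ 2 = 4 := by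
  have h2 : d = √2 ↔ d ^ 2 = 2 := by
    rw [eq_comm, Real.sqrt_eq_iff_eq_sq zero_le_two hd, eq_comm]
  have h4 : d = 2 ↔ d ^ 2 = 4 := by
    rw [show (4 : ℝ) = 2 ^ 2 by norm_num, sq_eq_sq₀ hd zero_le_two]
  simp only [Set.mem_insert_iff, Set.mem_singleton_iff, h2, h4]

lemma distSet_mono {m : ℕ} {X X' : Set (EuclideanSpace ℝ (Fin m))} (h : X ⊆ X') :
    distSet X ⊆ distSet X' :=
  fun _ ⟨x, hx, y, hy, hxy, hr⟩ => ⟨x, h hx, y, h hy, hxy, hr⟩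

lemma dist_mem_distSet_of_isTwoDistSet_union {m : ℕ} {X : Set (EuclideanSpace ℝ (Fin m))}
    {z : EuclideanSpace ℝ (Fin m)} (hX : IsTwoDistSet X) (hXz : IsTwoDistSet (X ∪ {z}))
    {x : EuclideanSpace ℝ (Fin m)} (hx : x ∈ X) (hzx : z ≠ x) : dist z x ∈ distSet X := by
  have hfin : (distSet (X ∪ {z})).Finite := Set.finite_of_ncard_ne_zero (by rw [hXz]; norm_num)
  have heq := Set.eq_of_subset_of_ncard_le (distSet_mono Set.subset_union_left)
    (by rw [hX, hXz]) hfin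
  exact heq ▸ ⟨z, Or.inr rfl, x, Or.inl hx, hzx, rfl⟩

section TwoLevel

variable {n : ℕ}

def twoLevel (b : ℝ) (s : Finset (Fin n)) : EuclideanSpace ℝ (Fin n) :=
  WithLp.toLp 2 fun i => if i ∈ s then b + 1 else b

lemma twoLevel_apply (b : ℝ) (s : Finset (Fin n)) (i : Fin n) :
    twoLevel b s i = if i ∈ s then b + 1 else b := rfl

lemma twoLevel_injective (b : ℝ) : Function.Injective (twoLevel (n := n) b) := by
  intro s t h
  ext i
  have := congrArg (· i) h
  by_cases hs : i ∈ s <;> by_cases ht : i ∈ t <;> simp [twoLevel_apply, hs, ht] at this ⊢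

lemma sum_twoLevel (b : ℝ) (s : Finset (Fin n)) : ∑ i, twoLevel b s i = n * b + s.card := by
  have h : ∀ i, twoLevel b s i = b + if i ∈ s then 1 else 0 := by
    intro i; by_cases hs : i ∈ s <;> simp [twoLevel_apply, hs]
  simp only [h, Finset.sum_add_distrib, Fintype.sum_ite_mem]
  simp

lemma dist_twoLevel_sq (b c : ℝ) (s t : Finset (Fin n)) :
    dist (twoLevel b s) (twoLevel c t) ^ 2 =
      n * (b - c) ^ 2 + s.card * (2 * (b - c) + 1) + t.card * (1 - 2 * (b - c))
        - 2 * (s ∩ t).card := by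
  have h : ∀ i, dist (twoLevel b s i) (twoLevel c t i) ^ 2 = (b - c) ^ 2
      + (if i ∈ s then 2 * (b - c) + 1 else 0) + (if i ∈ t then 1 - 2 * (b - c) else 0)
      - (if i ∈ s ∩ t then 2 else 0) := by
    intro i
    rw [Real.dist_eq, sq_abs]
    by_cases hs : i ∈ s <;> by_cases ht : i ∈ t <;> simp [twoLevel_apply, hs, ht] <;> ring
  rw [EuclideanSpace.dist_eq, Real.sq_sqrt (by positivity)]
  simp only [h, Finset.sum_add_distrib, Finset.sum_sub_distrib, Fintype.sum_ite_mem]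
  simp only [Finset.sum_const, Finset.card_univ, Fintype.card_fin, nsmul_eq_mul]
  ring

lemma norm_twoLevel_sq (b : ℝ) (s : Finset (Fin n)) :
    ‖twoLevel b s‖ ^ 2 = n * b ^ 2 + s.card * (2 * b + 1) := by
  have h0 : twoLevel 0 (∅ : Finset (Fin n)) = 0 := by ext i; simp [twoLevel_apply]
  rw [← dist_zero_right, ← h0, dist_twoLevel_sq]
  simp

lemma single_one_eq_twoLevel (j : Fin n) : EuclideanSpace.single j 1 = twoLevel 0 {j} := by
  ext i
  simp [twoLevel_apply, eq_comm]

lemma dist_single_one_sq (z : EuclideanSpace ℝ (Fin n)) (j : Fin n) :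
    dist z (EuclideanSpace.single j 1) ^ 2 = ‖z‖ ^ 2 - 2 * z j + 1 := by
  rw [dist_eq_norm, norm_sub_sq_real, EuclideanSpace.inner_single_right, PiLp.norm_single]
  simp

lemma dist_single_single_sq {i j : Fin n} (hij : i ≠ j) :
    dist (EuclideanSpace.single i (1 : ℝ)) (EuclideanSpace.single j 1) ^ 2 = 2 := by
  rw [single_one_eq_twoLevel, single_one_eq_twoLevel, dist_twoLevel_sq,
    Finset.singleton_inter_of_notMem (by simpa using hij)]
  norm_num

lemma eq_twoLevel_of_forall_eq_or_eq {z : EuclideanSpace ℝ (Fin n)} {b : ℝ}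
    (h : ∀ j, z j = b + 1 ∨ z j = b) : z = twoLevel b {j | z j = b + 1} := by
  ext j
  rcases h j with hj | hj <;> simp [twoLevel_apply, hj]

lemma exists_eq_twoLevel_of_forall_dist_single_mem {z : EuclideanSpace ℝ (Fin n)}
    (h : ∀ j, dist z (EuclideanSpace.single j 1) ∈ ({√2, 2} : Set ℝ)) :
    ∃ β B, z = twoLevel β B ∧ ‖z‖ ^ 2 = 2 * β + 3 := by
  refine ⟨(‖z‖ ^ 2 - 3) / 2, _, eq_twoLevel_of_forall_eq_or_eq fun j => ?_, by ring⟩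
  rcases (mem_sqrt_two_two_iff dist_nonneg).mp (h j) with hj | hj <;>
    rw [dist_single_one_sq] at hj
  · left; linarith
  · right; linarith

end TwoLevel

section Combinatorics

variable {α : Type*} [Fintype α] [DecidableEq α]

lemma exists_superset_inter_eq {P B : Finset α} {r : ℕ} (hP : P.card ≤ r)
    (hr : r ≤ (P ∪ Bᶜ).card) : ∃ A, P ⊆ A ∧ A.card = r ∧ A ∩ B = P ∩ B := by
  obtain ⟨A, hPA, hA, hAr⟩ := Finset.exists_subsuperset_card_eq Finset.subset_union_left hP hr
  refine ⟨A, hPA, hAr, le_antisymm (fun x hx => ?_) (Finset.inter_subset_inter_right hPA)⟩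
  rw [Finset.mem_inter] at hx ⊢
  rcases Finset.mem_union.mp (hA hx.1) with h | h
  · exact ⟨h, hx.2⟩
  · exact absurd hx.2 (Finset.mem_compl.mp h)

lemma exists_superset_card_inter_eq {P B : Finset α} {r : ℕ} (hP : (P ∪ Bᶜ).card ≤ r)
    (hr : r ≤ Fintype.card α) : ∃ A, P ⊆ A ∧ A.card = r ∧ (A ∩ B).card = r - Bᶜ.card := by
  obtain ⟨A, hPA, hAr⟩ := Finset.exists_superset_card_eq hP hr
  have hBA : Bᶜ ⊆ A := Finset.subset_union_right.trans hPA
  refine ⟨A, Finset.subset_union_left.trans hPA, hAr, ?_⟩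
  rw [← hAr, ← Finset.card_sdiff_of_subset hBA, sdiff_compl]; rfl

end Combinatorics

def Y : Set (Finset (Fin 9)) := {A | A.card = 4 ∧ 0 ∈ A ∧ 1 ∈ A}

def X : Set (EuclideanSpace ℝ (Fin 9)) := simplex 8 ∪ vFour '' Y

lemma vFour_eq_twoLevel (A : Finset (Fin 9)) : vFour A = twoLevel (-1/3) A := by
  ext i
  by_cases hi : i ∈ A <;> norm_num [vFour, twoLevel_apply, hi]

lemma dist_single_vFour_sq (i : Fin 9) {A : Finset (Fin 9)} (hA : A.card = 4) :
    dist (EuclideanSpace.single i (1 : ℝ)) (vFour A) ^ 2 = 4 - 2 * ({i} ∩ A).card := by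
  rw [single_one_eq_twoLevel, vFour_eq_twoLevel, dist_twoLevel_sq, hA]
  norm_num

lemma dist_vFour_vFour_sq {A B : Finset (Fin 9)} (hA : A.card = 4) (hB : B.card = 4) :
    dist (vFour A) (vFour B) ^ 2 = 8 - 2 * (A ∩ B).card := by
  rw [vFour_eq_twoLevel, vFour_eq_twoLevel, dist_twoLevel_sq, hA, hB]
  norm_num

lemma pair_subset_of_mem_Y {A : Finset (Fin 9)} (hA : A ∈ Y) : {0, 1} ⊆ A :=
  Finset.insert_subset hA.2.1 (Finset.singleton_subset_iff.mpr hA.2.2)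

lemma dist_vFour_vFour_sq_of_mem_Y {A B : Finset (Fin 9)} (hA : A ∈ Y) (hB : B ∈ Y)
    (hAB : A ≠ B) : dist (vFour A) (vFour B) ^ 2 = 2 ∨ dist (vFour A) (vFour B) ^ 2 = 4 := by
  have h2 : 2 ≤ (A ∩ B).card := by
    simpa using Finset.card_le_card
      (Finset.subset_inter (pair_subset_of_mem_Y hA) (pair_subset_of_mem_Y hB))
  have h3 : (A ∩ B).card < 4 := by
    refine hA.1 ▸ Finset.card_lt_card (Finset.inter_subset_left.ssubset_of_ne fun h => hAB ?_)
    exact Finset.eq_of_subset_of_card_le (Finset.inter_eq_left.mp h) (by rw [hA.1, hB.1])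
  rw [dist_vFour_vFour_sq hA.1 hB.1]
  interval_cases (A ∩ B).card <;> norm_num

lemma X_subset_Hplane : X ⊆ Hplane 8 := by
  rintro x (⟨i, rfl⟩ | ⟨A, hA, rfl⟩)
  · show ∑ k, EuclideanSpace.single i (1 : ℝ) k = 1
    rw [single_one_eq_twoLevel, sum_twoLevel]
    norm_num
  · show ∑ k, _ = 1
    rw [vFour_eq_twoLevel, sum_twoLevel, hA.1]
    norm_num

lemma single_one_ne_vFour (i : Fin 9) {A : Finset (Fin 9)} (hA : A.card = 4) :
    EuclideanSpace.single i (1 : ℝ) ≠ vFour A := by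
  intro h
  have h1 : ({i} ∩ A).card ≤ 1 := (Finset.card_le_card Finset.inter_subset_left).trans_eq rfl
  have h0 := dist_single_vFour_sq i hA
  rw [h, dist_self] at h0
  have : (({i} ∩ A).card : ℝ) ≤ 1 := by exact_mod_cast h1
  nlinarith

lemma ncard_X : X.ncard = 30 := by
  have hS : (simplex 8).ncard = 9 := by
    have hinj : Function.Injective fun j : Fin 9 => EuclideanSpace.single j (1 : ℝ) := by
      intro i j h
      simp only [single_one_eq_twoLevel] at h
      exact Finset.singleton_injective (twoLevel_injective 0 h)
    rw [simplex, ← Set.image_univ, Set.ncard_image_of_injective _ hinj, Set.ncard_univ,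
      Nat.card_eq_fintype_card, Fintype.card_fin]
  have hY : (vFour '' Y).ncard = 21 := by
    have hinj : Function.Injective vFour := by
      simpa only [funext vFour_eq_twoLevel] using twoLevel_injective (n := 9) (-1/3)
    have hYfin :
        Y = ↑(Finset.univ.filter fun A : Finset (Fin 9) => A.card = 4 ∧ 0 ∈ A ∧ 1 ∈ A) := by
      ext; simp [Y]
    rw [Set.ncard_image_of_injective _ hinj, hYfin, Set.ncard_coe_finset]
    decide
  have hdisj : Disjoint (simplex 8) (vFour '' Y) := by
    rw [Set.disjoint_left]
    rintro x ⟨i, rfl⟩ ⟨A, hA, hAi⟩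
    exact single_one_ne_vFour i hA.1 hAi.symm
  rw [X, Set.ncard_union_eq hdisj (Set.finite_range _) ((Set.toFinite Y).image _), hS, hY]

lemma dist_mem_of_mem_X {x y : EuclideanSpace ℝ (Fin 9)} (hx : x ∈ X) (hy : y ∈ X)
    (hxy : x ≠ y) : dist x y ∈ ({√2, 2} : Set ℝ) := by
  rw [mem_sqrt_two_two_iff dist_nonneg]
  rcases hx with ⟨i, rfl⟩ | ⟨A, hA, rfl⟩ <;> rcases hy with ⟨j, rfl⟩ | ⟨B, hB, rfl⟩
  · exact .inl (dist_single_single_sq fun h => hxy (by rw [h]))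
  · rw [dist_single_vFour_sq i hB.1]
    by_cases h : i ∈ B <;> norm_num [h]
  · rw [dist_comm, dist_single_vFour_sq j hA.1]
    by_cases h : j ∈ A <;> norm_num [h]
  · exact dist_vFour_vFour_sq_of_mem_Y hA hB fun h => hxy (by rw [h])

lemma distSet_X : distSet X = {√2, 2} := by
  refine le_antisymm (fun r ⟨x, hx, y, hy, hxy, hr⟩ => hr ▸ dist_mem_of_mem_X hx hy hxy) ?_
  have hA : ({0, 1, 3, 4} : Finset (Fin 9)) ∈ Y := ⟨by decide, by decide, by decide⟩
  have h01 : EuclideanSpace.single (0 : Fin 9) (1 : ℝ) ≠ EuclideanSpace.single 1 1 := by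
    rw [single_one_eq_twoLevel, single_one_eq_twoLevel, (twoLevel_injective 0).ne_iff]
    decide
  rintro r (rfl | rfl)
  · refine ⟨_, Or.inl ⟨0, rfl⟩, _, Or.inl ⟨1, rfl⟩, h01, ?_⟩
    rw [← Real.sqrt_sq dist_nonneg, dist_single_single_sq (by decide)]
  · refine ⟨_, Or.inl ⟨2, rfl⟩, _, Or.inr ⟨_, hA, rfl⟩, single_one_ne_vFour 2 hA.1, ?_⟩
    rw [← sq_eq_sq₀ dist_nonneg zero_le_two, dist_single_vFour_sq 2 hA.1,
      Finset.singleton_inter_of_notMem (by decide)]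
    norm_num

lemma card_eq_four_or_seven {β : ℝ} {B : Finset (Fin 9)} (hH : twoLevel β B ∈ Hplane 8)
    (hnorm : ‖twoLevel β B‖ ^ 2 = 2 * β + 3) :
    (B.card = 4 ∧ β = -1/3) ∨ (B.card = 7 ∧ β = -2/3) := by
  have hsum : 9 * β + B.card = 1 := by
    have := sum_twoLevel β B
    rw [hH] at this
    norm_num at this
    linarith
  rw [norm_twoLevel_sq] at hnorm
  push_cast at hnorm
  have hk : ((B.card : ℝ) - 4) * (B.card - 7) = 0 := by nlinarith
  rcases mul_eq_zero.mp hk with hk | hk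
  · exact .inl ⟨by exact_mod_cast (sub_eq_zero.mp hk), by linarith⟩
  · exact .inr ⟨by exact_mod_cast (sub_eq_zero.mp hk), by linarith⟩

lemma mem_Y_of_forall_dist_vFour_mem {B : Finset (Fin 9)} (hB : B.card = 4)
    (h : ∀ A ∈ Y, dist (vFour B) (vFour A) ∈ ({√2, 2} : Set ℝ)) : B ∈ Y := by
  have hP : ({0, 1} : Finset (Fin 9)).card ≤ 4 := by decide
  have hr : 4 ≤ ({0, 1} ∪ Bᶜ : Finset (Fin 9)).card := by
    refine le_trans ?_ (Finset.card_le_card Finset.subset_union_right)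
    simp [Finset.card_compl, hB]
  obtain ⟨A, hPA, hA, hAB⟩ := exists_superset_inter_eq hP hr
  have hAY : A ∈ Y := ⟨hA, hPA (by simp), hPA (by simp)⟩
  have hd := (mem_sqrt_two_two_iff dist_nonneg).mp (h A hAY)
  rw [dist_vFour_vFour_sq hB hA, Finset.inter_comm, hAB] at hd
  have hcard : 2 ≤ ({0, 1} ∩ B : Finset (Fin 9)).card := by
    have : (1 : ℝ) < (({0, 1} ∩ B : Finset (Fin 9)).card : ℝ) := by
      rcases hd with hd | hd <;> linarith
    exact_mod_cast this
  have hPB : ({0, 1} : Finset (Fin 9)) ⊆ B := Finset.inter_eq_left.mp <|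
    Finset.eq_of_subset_of_card_le Finset.inter_subset_left (le_trans (by decide) hcard)
  exact ⟨hB, hPB (by simp), hPB (by simp)⟩

lemma exists_mem_Y_dist_twoLevel_vFour_sq {B : Finset (Fin 9)} (hB : B.card = 7) :
    ∃ A ∈ Y, dist (twoLevel (-2/3) B) (vFour A) ^ 2 = 6 := by
  have hBc : Bᶜ.card = 2 := by rw [Finset.card_compl, hB, Fintype.card_fin]
  have hP : ({0, 1} ∪ Bᶜ : Finset (Fin 9)).card ≤ 4 :=
    (Finset.card_union_le _ _).trans (by rw [hBc]; decide)
  obtain ⟨A, hPA, hA, hAB⟩ := exists_superset_card_inter_eq hP (by simp)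
  refine ⟨A, ⟨hA, hPA (by simp), hPA (by simp)⟩, ?_⟩
  rw [vFour_eq_twoLevel, dist_twoLevel_sq, hB, hA, Finset.inter_comm, hAB, hBc]
  norm_num

lemma mem_X_of_forall_dist_mem {z : EuclideanSpace ℝ (Fin 9)} (hz : z ∈ Hplane 8)
    (h : ∀ x ∈ X, dist z x ∈ ({√2, 2} : Set ℝ)) : z ∈ X := by
  obtain ⟨β, B, rfl, hnorm⟩ :=
    exists_eq_twoLevel_of_forall_dist_single_mem fun j => h _ (Or.inl ⟨j, rfl⟩)
  have hY : ∀ A ∈ Y, dist (twoLevel β B) (vFour A) ∈ ({√2, 2} : Set ℝ) :=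
    fun A hA => h _ (Or.inr ⟨A, hA, rfl⟩)
  rcases card_eq_four_or_seven hz hnorm with ⟨hB, rfl⟩ | ⟨hB, rfl⟩
  · rw [← vFour_eq_twoLevel] at hY ⊢
    exact Or.inr ⟨B, mem_Y_of_forall_dist_vFour_mem hB hY, rfl⟩
  · obtain ⟨A, hA, hd⟩ := exists_mem_Y_dist_twoLevel_vFour_sq hB
    have := (mem_sqrt_two_two_iff dist_nonneg).mp (hY A hA)
    rw [hd] at this
    norm_num at this

lemma not_isTwoDistSet_union_singleton {z : EuclideanSpace ℝ (Fin 9)} (hz : z ∈ Hplane 8)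
    (hzX : z ∉ X) : ¬ IsTwoDistSet (X ∪ {z}) := by
  have hX : IsTwoDistSet X := by
    have hne : √2 ≠ (2 : ℝ) := ((Real.sqrt_lt' two_pos).mpr (by norm_num)).ne
    rw [IsTwoDistSet, distSet_X, Set.ncard_pair hne]
  refine fun hXz => hzX (mem_X_of_forall_dist_mem hz fun x hx => ?_)
  rw [← distSet_X]
  exact dist_mem_distSet_of_isTwoDistSet_union hX hXz hx fun h => hzX (h ▸ hx)

end TwoDistance

theorem stmt18 :
    (simplex 8 ∪ vFour ''
        {A : Finset (Fin (8+1)) | A.card = 4 ∧ (0 : Fin (8+1)) ∈ A ∧ (1 : Fin (8+1)) ∈ A})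
      ⊆ Hplane 8 ∧
    (simplex 8 ∪ vFour ''
        {A : Finset (Fin (8+1)) | A.card = 4 ∧ (0 : Fin (8+1)) ∈ A ∧ (1 : Fin (8+1)) ∈ A}).ncard
      = 30 ∧
    distSet (simplex 8 ∪ vFour ''
        {A : Finset (Fin (8+1)) | A.card = 4 ∧ (0 : Fin (8+1)) ∈ A ∧ (1 : Fin (8+1)) ∈ A})
      = {Real.sqrt 2, 2} ∧
    ∀ z ∈ Hplane 8,
      z ∉ (simplex 8 ∪ vFour ''
        {A : Finset (Fin (8+1)) | A.card = 4 ∧ (0 : Fin (8+1)) ∈ A ∧ (1 : Fin (8+1)) ∈ A}) →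
      ¬ IsTwoDistSet ((simplex 8 ∪ vFour ''
        {A : Finset (Fin (8+1)) | A.card = 4 ∧ (0 : Fin (8+1)) ∈ A ∧ (1 : Fin (8+1)) ∈ A})
        ∪ {z}) :=
  ⟨TwoDistance.X_subset_Hplane, TwoDistance.ncard_X, TwoDistance.distSet_X,
    fun _ => TwoDistance.not_isTwoDistSet_union_singleton⟩
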